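/- Let m be a positive integer not divisible by 3, and let 1 ≤ α ≤ n. Then u_i ≢ u_j (mod m) for every pair (i, j) with α ≤ i < j ≤ n and i ≡ j (mod 2), if and only if the multiplicative order of 9 modulo 4m exceeds (n − α)/2. -/

import Mathlib

/-!
Since `4 uⱼ = 3ʲ - 5 (-1)ʲ`, two terms of equal parity differ by `4 (u_{i+2k} - uᵢ) = 3ⁱ (9ᵏ - 1)`.
As `3` is invertible modulo `4m`, this gives `uᵢ ≡ u_{i+2k} (mod m)` iff `9ᵏ = 1` in `ZMod (4m)`,
so a collision among same-parity indices in `[α, n]` exists iff some `k` with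
`0 < 2k ≤ n - α` is a multiple of the order of `9`.
-/

/-- The Salajan sequence: `u j = (3^j - 5*(-1)^j)/4`. -/
def salajanU (j : ℕ) : ℤ := ((3 : ℤ) ^ j - 5 * (-1) ^ j) / 4

theorem lt_orderOf_iff_pow_ne_one {G : Type*} [Monoid G] {x : G} (hx : IsOfFinOrder x) {N : ℕ} :
    N < orderOf x ↔ ∀ k, 0 < k → k ≤ N → x ^ k ≠ 1 := by
  refine ⟨fun hN k hk hkN => pow_ne_one_of_lt_orderOf hk.ne' (by omega), fun h => ?_⟩
  by_contra! hle
  exact h _ hx.orderOf_pos hle (pow_orderOf_eq_one x)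

theorem four_mul_salajanU (j : ℕ) : 4 * salajanU j = 3 ^ j - 5 * (-1) ^ j := by
  have h : (5 : ℤ) * (-1) ^ j ≡ 3 ^ j [ZMOD 4] := calc
    (5 : ℤ) * (-1) ^ j ≡ 1 * (-1) ^ j [ZMOD 4] := Int.ModEq.mul_right _ (by decide)
    _ = (-1) ^ j := one_mul _
    _ ≡ 3 ^ j [ZMOD 4] := Int.ModEq.pow j (by decide)
  exact Int.mul_ediv_cancel' h.dvd

theorem four_mul_salajanU_add_two_mul_sub (i k : ℕ) :
    4 * (salajanU (i + 2 * k) - salajanU i) = 3 ^ i * (9 ^ k - 1) := by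
  rw [mul_sub, four_mul_salajanU, four_mul_salajanU, pow_add, pow_add, pow_mul, pow_mul]
  ring

theorem isUnit_three_zmod_four_mul {m : ℕ} (h3 : ¬ 3 ∣ m) : IsUnit (3 : ZMod (4 * m)) := by
  have h34 : ¬ 3 ∣ 4 * m := fun h =>
    ((Nat.prime_three.dvd_mul).mp h).elim (by decide) h3
  exact_mod_cast (ZMod.isUnit_prime_iff_not_dvd Nat.prime_three).mpr h34

theorem salajanU_modEq_add_two_mul_iff {m : ℕ} (h3 : ¬ 3 ∣ m) (i k : ℕ) :
    salajanU i ≡ salajanU (i + 2 * k) [ZMOD m] ↔ (9 : ZMod (4 * m)) ^ k = 1 := by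
  rw [Int.modEq_iff_dvd, ← mul_dvd_mul_iff_left (four_ne_zero (α := ℤ)),
    four_mul_salajanU_add_two_mul_sub, show (4 : ℤ) * m = ((4 * m : ℕ) : ℤ) by push_cast; rfl,
    ← ZMod.intCast_zmod_eq_zero_iff_dvd]
  push_cast
  rw [((isUnit_three_zmod_four_mul h3).pow i).mul_right_eq_zero, sub_eq_zero]

theorem salajan_same_parity_incongruent_iff_general (m : ℕ) (hm : 0 < m) (h3 : ¬ 3 ∣ m)
    (α n : ℕ) :
    (∀ i j : ℕ, α ≤ i → i < j → j ≤ n → i % 2 = j % 2 →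
      ¬ (salajanU i ≡ salajanU j [ZMOD (m : ℤ)])) ↔
    n - α < 2 * orderOf (9 : ZMod (4 * m)) := by
  have : NeZero (4 * m) := ⟨by omega⟩
  have hfin : IsOfFinOrder (9 : ZMod (4 * m)) := by
    rw [isOfFinOrder_iff_isUnit, show (9 : ZMod (4 * m)) = 3 ^ 2 by norm_num]
    exact (isUnit_three_zmod_four_mul h3).pow 2
  have hord := lt_orderOf_iff_pow_ne_one hfin (N := (n - α) / 2)
  constructor
  · intro H
    suffices (n - α) / 2 < orderOf (9 : ZMod (4 * m)) by omega
    refine hord.mpr fun k hk hkN h9 => ?_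
    exact H α (α + 2 * k) le_rfl (by omega) (by omega) (by omega)
      ((salajanU_modEq_add_two_mul_iff h3 α k).mpr h9)
  · intro hlt i j hi hij hj hpar
    obtain ⟨k, rfl⟩ : ∃ k, j = i + 2 * k := ⟨(j - i) / 2, by omega⟩
    rw [salajanU_modEq_add_two_mul_iff h3]
    exact hord.mp (by omega) k (by omega) (by omega)

theorem salajan_same_parity_incongruent_iff (m : ℕ) (hm : 0 < m) (h3 : ¬ 3 ∣ m)
    (α n : ℕ) (hα : 1 ≤ α) (hαn : α ≤ n) :
    (∀ i j : ℕ, α ≤ i → i < j → j ≤ n → i % 2 = j % 2 →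
      ¬ (salajanU i ≡ salajanU j [ZMOD (m : ℤ)])) ↔
    n - α < 2 * orderOf (9 : ZMod (4 * m)) :=
  salajan_same_parity_incongruent_iff_general m hm h3 α n
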